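/- For all x in [0,1], 0 ≤ τ(x) ≤ 2/3, and τ(1/3) = 2/3, so the maximum value 2/3 is attained. -/

import Mathlib

open scoped BigOperators

/-- Distance from a real number to the nearest integer. -/
noncomputable def nearestDist (t : ℝ) : ℝ := |t - round t|

/-- The Takagi function. -/
noncomputable def takagi (x : ℝ) : ℝ := ∑' n : ℕ, (1 / 2 ^ n) * nearestDist (2 ^ n * x)

/-- Partial Takagi function of level `n`. -/
noncomputable def takagiPartial (n : ℕ) (x : ℝ) : ℝ :=
  ∑ j ∈ Finset.range n, (1 / 2 ^ j) * nearestDist (2 ^ j * x)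

/-- The symmetric tent map. -/
noncomputable def tent (x : ℝ) : ℝ := if x ≤ 1 / 2 then 2 * x else 2 - 2 * x

/-!
Write `d t` for the distance from `t` to the nearest integer. Doubling gives `d (2t) ≤ 1 - 2 d t`,
so two consecutive terms of the series satisfy `d (2ⁿx) / 2ⁿ + d (2ⁿ⁺¹x) / 2ⁿ⁺¹ ≤ 1 / 2ⁿ⁺¹`;
pairing the terms of index `2k` and `2k + 1` bounds `τ x` by `∑ₖ 1 / 2^(2k+1) = 2/3`.
At `x = 1/3` every term attains `d (2ⁿ/3) = 1/3`, because `2ⁿ⁺¹/3 = 2ⁿ - 2ⁿ/3`.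
-/

lemma nearestDist_nonneg (t : ℝ) : 0 ≤ nearestDist t := abs_nonneg _

lemma nearestDist_le_half (t : ℝ) : nearestDist t ≤ 1 / 2 := abs_sub_round t

lemma nearestDist_le_abs_sub_intCast (t : ℝ) (m : ℤ) : nearestDist t ≤ |t - m| := round_le t m

lemma nearestDist_neg (t : ℝ) : nearestDist (-t) = nearestDist t := by
  apply le_antisymm
  · calc nearestDist (-t) ≤ |-t - ((-round t : ℤ) : ℝ)| := nearestDist_le_abs_sub_intCast _ _
      _ = nearestDist t := by rw [nearestDist, ← abs_neg]; push_cast; ring_nf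
  · calc nearestDist t ≤ |t - ((-round (-t) : ℤ) : ℝ)| := nearestDist_le_abs_sub_intCast _ _
      _ = nearestDist (-t) := by rw [nearestDist, ← abs_neg]; push_cast; ring_nf

lemma nearestDist_intCast_sub (m : ℤ) (t : ℝ) : nearestDist (m - t) = nearestDist t := by
  rw [sub_eq_neg_add, nearestDist, round_add_intCast, ← nearestDist_neg, nearestDist]
  push_cast
  ring_nf

lemma nearestDist_two_mul_le (t : ℝ) : nearestDist (2 * t) ≤ 1 - 2 * nearestDist t := by
  have hhalf := nearestDist_le_half t
  unfold nearestDist at hhalf ⊢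
  set r := round t
  -- The odd integer `2r ± 1` on the side of `2t` lies at distance `1 - 2|t - r|` from `2t`.
  rcases le_or_gt (r : ℝ) t with hle | hlt
  · calc |2 * t - round (2 * t)| ≤ |2 * t - ((2 * r + 1 : ℤ) : ℝ)| := round_le _ _
      _ = 1 - 2 * |t - r| := by
        rw [abs_of_nonneg (sub_nonneg.mpr hle)] at hhalf ⊢
        rw [abs_of_nonpos (by push_cast; linarith)]
        push_cast; ring
  · calc |2 * t - round (2 * t)| ≤ |2 * t - ((2 * r - 1 : ℤ) : ℝ)| := round_le _ _
      _ = 1 - 2 * |t - r| := by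
        rw [abs_of_neg (sub_neg.mpr hlt)] at hhalf ⊢
        rw [abs_of_nonneg (by push_cast; linarith)]
        push_cast; ring

lemma nearestDist_two_pow_mul_third (n : ℕ) : nearestDist (2 ^ n * (1 / 3)) = 1 / 3 := by
  induction n with
  | zero =>
    have hround : round ((1 : ℝ) / 3) = 0 := round_eq_zero_iff.mpr ⟨by norm_num, by norm_num⟩
    norm_num [nearestDist, hround]
  | succ n ih =>
    have hsplit : (2 : ℝ) ^ (n + 1) * (1 / 3) = ((2 ^ n : ℤ) : ℝ) - 2 ^ n * (1 / 3) := by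
      push_cast; ring
    rw [hsplit, nearestDist_intCast_sub, ih]

noncomputable def takagiTerm (x : ℝ) (n : ℕ) : ℝ := 1 / 2 ^ n * nearestDist (2 ^ n * x)

lemma takagi_eq_tsum_takagiTerm (x : ℝ) : takagi x = ∑' n, takagiTerm x n := rfl

lemma takagiTerm_nonneg (x : ℝ) (n : ℕ) : 0 ≤ takagiTerm x n :=
  mul_nonneg (by positivity) (nearestDist_nonneg _)

lemma takagiTerm_le (x : ℝ) (n : ℕ) : takagiTerm x n ≤ 1 / 2 * (1 / 2) ^ n := by
  calc takagiTerm x n ≤ 1 / 2 ^ n * (1 / 2) :=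
        mul_le_mul_of_nonneg_left (nearestDist_le_half _) (by positivity)
    _ = 1 / 2 * (1 / 2) ^ n := by rw [one_div_pow]; ring

lemma summable_takagiTerm (x : ℝ) : Summable (takagiTerm x) :=
  Summable.of_nonneg_of_le (takagiTerm_nonneg x) (takagiTerm_le x)
    ((summable_geometric_two).mul_left _)

lemma takagiTerm_add_takagiTerm_succ_le (x : ℝ) (n : ℕ) :
    takagiTerm x n + takagiTerm x (n + 1) ≤ 1 / 2 ^ (n + 1) := by
  have hdouble := nearestDist_two_mul_le (2 ^ n * x)
  rw [← mul_assoc, ← pow_succ'] at hdouble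
  calc takagiTerm x n + takagiTerm x (n + 1)
      ≤ 1 / 2 ^ n * nearestDist (2 ^ n * x)
        + 1 / 2 ^ (n + 1) * (1 - 2 * nearestDist (2 ^ n * x)) := by
        unfold takagiTerm; gcongr
    _ = 1 / 2 ^ (n + 1) := by rw [pow_succ]; field_simp; ring

lemma takagi_nonneg (x : ℝ) : 0 ≤ takagi x := tsum_nonneg (takagiTerm_nonneg x)

lemma takagi_le_two_thirds (x : ℝ) : takagi x ≤ 2 / 3 := by
  have hsum := summable_takagiTerm x
  have heven : Summable fun k => takagiTerm x (2 * k) :=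
    hsum.comp_injective fun a b h => by omega
  have hodd : Summable fun k => takagiTerm x (2 * k + 1) :=
    hsum.comp_injective fun a b h => by omega
  have hgeom : HasSum (fun k : ℕ => 1 / 2 * (1 / 4 : ℝ) ^ k) (2 / 3) := by
    have h := (hasSum_geometric_of_lt_one (r := (1 / 4 : ℝ)) (by norm_num) (by norm_num)).mul_left
      (1 / 2)
    norm_num at h ⊢
    exact h
  have hpair (k : ℕ) : takagiTerm x (2 * k) + takagiTerm x (2 * k + 1) ≤ 1 / 2 * (1 / 4) ^ k := by
    calc _ ≤ 1 / 2 ^ (2 * k + 1) := takagiTerm_add_takagiTerm_succ_le x (2 * k)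
      _ = 1 / 2 * (1 / 4) ^ k := by rw [pow_succ, pow_mul, one_div_pow]; norm_num
  rw [takagi_eq_tsum_takagiTerm, ← tsum_even_add_odd heven hodd, ← heven.tsum_add hodd]
  exact hasSum_le hpair (heven.add hodd).hasSum hgeom

lemma takagi_one_third : takagi (1 / 3) = 2 / 3 := by
  have hterm (n : ℕ) : takagiTerm (1 / 3) n = 1 / 3 * (1 / 2) ^ n := by
    rw [takagiTerm, nearestDist_two_pow_mul_third, one_div_pow]; ring
  rw [takagi_eq_tsum_takagiTerm, tsum_congr hterm, tsum_mul_left, tsum_geometric_two]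
  norm_num

theorem takagi_bounds :
    (∀ x ∈ Set.Icc (0:ℝ) 1, 0 ≤ takagi x ∧ takagi x ≤ 2 / 3) ∧
    takagi (1 / 3) = 2 / 3 :=
  ⟨fun x _ => ⟨takagi_nonneg x, takagi_le_two_thirds x⟩, takagi_one_third⟩
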